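/- arXiv:2509.05466 — 3 statements merged into one kernel-verified Lean document; each statement's English description precedes it below -/
import Mathlib

section
/- For a complex number λ = εγ + iω with ε, γ, ω real, sinhc(ρλ) = sin(ρω)/(ρω) + iεργ·f₁(ω) + ε²ρ²γ²·f₂(ω) + O(ε³) as ε → 0, where f₁(ω) = (sin(ρω) - ρω cos(ρω))/(ρω)² and f₂(ω) = (ρ²ω² sin(ρω) - 2 sin(ρω) + 2ρω cos(ρω))/(2(ρω)³). -/
open Filter Asymptotics

lemma analyticAt_isBigO_cube {h : ℂ → ℂ} (hh : AnalyticAt ℂ h 0) (h0 : h 0 = 0)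
    (h1 : deriv h 0 = 0) (h2 : deriv (deriv h) 0 = 0) :
    h =O[nhds (0 : ℂ)] fun z => z ^ 3 := by
  obtain ⟨p, hp⟩ := hh
  have c0 : p.coeff 0 = 0 := by
    have := hp.coeff_zero 1
    rw [h0] at this; exact this
  have c1 : p.coeff 1 = 0 := by
    have := hp.deriv
    rw [h1] at this; exact this.symm
  have c2 : p.coeff 2 = 0 := by
    obtain ⟨r, hpr⟩ := hp
    have hfs := hpr.factorial_smul (1 : ℂ) 2
    rw [← iteratedDeriv_eq_iteratedFDeriv] at hfs
    have h2' : iteratedDeriv 2 h 0 = 0 := by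
      rw [show (2:ℕ) = 1 + 1 from rfl, iteratedDeriv_succ, iteratedDeriv_one, h2]
    rw [h2'] at hfs
    have h2s : (2 : ℕ) • p.coeff 2 = 0 := hfs
    rw [two_smul, add_self_eq_zero] at h2s
    exact h2s
  have hO := hp.isBigO_sub_partialSum_pow 3
  have hps : ∀ y : ℂ, p.partialSum 3 y = 0 := by
    intro y
    simp only [FormalMultilinearSeries.partialSum,
      FormalMultilinearSeries.apply_eq_pow_smul_coeff, c0, c1, c2, smul_zero,
      Finset.sum_const_zero, Finset.sum_range_succ, Finset.sum_range_zero, add_zero]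
  have h1O : h =O[nhds (0:ℂ)] fun y => ‖y‖ ^ 3 := by
    refine hO.congr (fun y => ?_) (fun y => rfl)
    rw [hps, zero_add, sub_zero]
  have h2O : h =O[nhds (0:ℂ)] fun y => ‖y ^ 3‖ := by simpa [norm_pow] using h1O
  exact h2O.of_norm_right


/-- Complex `sinhc`: `sinh z / z` for `z ≠ 0` and `1` at `z = 0`. -/
noncomputable def csinhc (z : ℂ) : ℂ := if z = 0 then 1 else Complex.sinh z / z

/-- `f₁(ω) = (sin(ρω) - ρω·cos(ρω))/(ρω)²`. -/
noncomputable def f₁ (ρ ω : ℝ) : ℝ :=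
  (Real.sin (ρ * ω) - ρ * ω * Real.cos (ρ * ω)) / (ρ * ω) ^ 2

/-- `f₂(ω) = (ρ²ω²·sin(ρω) - 2·sin(ρω) + 2ρω·cos(ρω))/(2(ρω)³)`. -/
noncomputable def f₂ (ρ ω : ℝ) : ℝ :=
  ((ρ * ω) ^ 2 * Real.sin (ρ * ω) - 2 * Real.sin (ρ * ω) + 2 * (ρ * ω) * Real.cos (ρ * ω)) /
    (2 * (ρ * ω) ^ 3)

/-- Second-order expansion of `sinhc(ρ(εγ + iω))` in `ε`:
`sinhc(ρ(εγ+iω)) = sin(ρω)/(ρω) + iεργ f₁(ω) + ε²ρ²γ² f₂(ω) + O(ε³)` as `ε → 0`. -/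
theorem sinhc_expansion (ρ ω γ : ℝ) (hρ : 0 < ρ) (hω : ω ≠ 0) :
    (fun ε : ℝ =>
        csinhc ((ρ : ℂ) * ((ε : ℂ) * (γ : ℂ) + Complex.I * (ω : ℂ))) -
          (((Real.sin (ρ * ω) / (ρ * ω) : ℝ) : ℂ) +
            Complex.I * ((ε * ρ * γ : ℝ) : ℂ) * ((f₁ ρ ω : ℝ) : ℂ) +
            ((ε ^ 2 * ρ ^ 2 * γ ^ 2 : ℝ) : ℂ) * ((f₂ ρ ω : ℝ) : ℂ)))
      =O[nhds (0 : ℝ)] fun ε : ℝ => ε ^ 3 := by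
  have ht : (ρ * ω : ℝ) ≠ 0 := mul_ne_zero hρ.ne' hω
  have htc : ((ρ * ω : ℝ) : ℂ) ≠ 0 := by exact_mod_cast ht
  have hρc : (ρ : ℂ) ≠ 0 := by exact_mod_cast hρ.ne'
  have hωc : (ω : ℂ) ≠ 0 := by exact_mod_cast hω
  set A : ℂ := ((ρ * ω : ℝ) : ℂ) * Complex.I with hA_def
  have hA : A ≠ 0 := mul_ne_zero htc Complex.I_ne_zero
  set B : ℂ := ((ρ * γ : ℝ) : ℂ) with hB_def
  set w : ℂ → ℂ := fun z => B * z + A with hw_def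
  have hw0 : w 0 = A := by simp [hw_def]
  set c₀ : ℂ := ((Real.sin (ρ * ω) / (ρ * ω) : ℝ) : ℂ) with hc₀_def
  set c₁ : ℂ := Complex.I * B * ((f₁ ρ ω : ℝ) : ℂ) with hc₁_def
  set c₂ : ℂ := B ^ 2 * ((f₂ ρ ω : ℝ) : ℂ) with hc₂_def
  set g : ℂ → ℂ := fun z => Complex.sinh (w z) / w z with hg_def
  set h : ℂ → ℂ := fun z => g z - (c₀ + c₁ * z + c₂ * z ^ 2) with hh_def
  have hsA : Complex.sinh A = ((Real.sin (ρ * ω) : ℝ) : ℂ) * Complex.I := by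
    rw [hA_def, Complex.sinh_mul_I, Complex.ofReal_sin]
  have hcA : Complex.cosh A = ((Real.cos (ρ * ω) : ℝ) : ℂ) := by
    rw [hA_def, Complex.cosh_mul_I, Complex.ofReal_cos]
  -- derivative infrastructure
  have hwD : ∀ z : ℂ, HasDerivAt w B z := by
    intro z
    exact (((hasDerivAt_id z).const_mul B).add_const A).congr_deriv (mul_one B)
  have hsD : ∀ z : ℂ, HasDerivAt (fun z => Complex.sinh (w z)) (Complex.cosh (w z) * B) z := by
    intro z
    exact (Complex.hasDerivAt_sinh (w z)).comp z (hwD z)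
  have hcD : ∀ z : ℂ, HasDerivAt (fun z => Complex.cosh (w z)) (Complex.sinh (w z) * B) z := by
    intro z
    exact (Complex.hasDerivAt_cosh (w z)).comp z (hwD z)
  have hgD : ∀ z : ℂ, w z ≠ 0 → HasDerivAt g
      ((Complex.cosh (w z) * B * w z - Complex.sinh (w z) * B) / (w z) ^ 2) z := by
    intro z hz
    exact (hsD z).div (hwD z) hz
  set g₁ : ℂ → ℂ := fun z =>
    (Complex.cosh (w z) * B * w z - Complex.sinh (w z) * B) / (w z) ^ 2 with hg₁_def
  have hg₁D : ∀ z : ℂ, w z ≠ 0 → HasDerivAt g₁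
      (((Complex.sinh (w z) * B * B * w z + Complex.cosh (w z) * B * B
          - Complex.cosh (w z) * B * B) * (w z) ^ 2
        - (Complex.cosh (w z) * B * w z - Complex.sinh (w z) * B) * (2 * (w z) ^ 1 * B))
        / ((w z) ^ 2) ^ 2) z := by
    intro z hz
    have hu : HasDerivAt (fun z => Complex.cosh (w z) * B * w z - Complex.sinh (w z) * B)
        (Complex.sinh (w z) * B * B * w z + Complex.cosh (w z) * B * B
          - Complex.cosh (w z) * B * B) z := by
      have h1 := ((hcD z).mul_const B).mul (hwD z)
      have h2 := (hsD z).mul_const B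
      have := h1.sub h2
      exact this
    have hv : HasDerivAt (fun z => (w z) ^ 2) (2 * (w z) ^ 1 * B) z := by
      exact ((hwD z).pow 2).congr_deriv (by norm_num)
    exact hu.div hv (pow_ne_zero _ hz)
  have hpolyD : ∀ z : ℂ, HasDerivAt (fun z => c₀ + c₁ * z + c₂ * z ^ 2) (c₁ + 2 * c₂ * z) z := by
    intro z
    have h1 : HasDerivAt (fun z : ℂ => c₁ * z) c₁ z := by
      simpa using (hasDerivAt_id z).const_mul c₁
    have h2 : HasDerivAt (fun z : ℂ => c₂ * z ^ 2) (c₂ * (2 * z ^ 1)) z :=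
      (hasDerivAt_pow 2 z).const_mul c₂
    have := (h1.const_add c₀).add h2
    exact this.congr_deriv (by ring)
  -- eventual nonvanishing of w
  have hwC : Continuous w := by fun_prop
  have hwne : ∀ᶠ z in nhds (0 : ℂ), w z ≠ 0 := by
    have : ContinuousAt w 0 := hwC.continuousAt
    exact this.eventually_ne (by rw [hw0]; exact hA)
  -- analyticity
  have hwDiff : Differentiable ℂ w := by fun_prop
  have hgA : AnalyticAt ℂ g 0 := by
    refine ((Complex.differentiable_sinh.comp hwDiff).analyticAt 0).div
      (hwDiff.analyticAt 0) ?_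
    rw [hw0]; exact hA
  have hpolyDiff : Differentiable ℂ (fun z : ℂ => c₀ + c₁ * z + c₂ * z ^ 2) := by fun_prop
  have hhA : AnalyticAt ℂ h 0 := hgA.sub (hpolyDiff.analyticAt 0)
  -- value at 0
  have h0 : h 0 = 0 := by
    simp only [hh_def, hg_def, hw0, hsA, hc₀_def, hA_def]
    push_cast
    field_simp
    rw [Complex.sinh_mul_I]
    ring
  -- first derivative at 0
  have h1 : deriv h 0 = 0 := by
    have hd := ((hgD 0 (by rw [hw0]; exact hA)).sub (hpolyD 0))
    rw [show deriv h 0 = _ from hd.deriv, hw0, hsA, hcA]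
    rw [hc₁_def, hA_def, hB_def, f₁]
    push_cast
    field_simp
    ring_nf
    rw [Complex.I_sq]
    ring
  -- second derivative at 0
  have hEv : deriv h =ᶠ[nhds (0:ℂ)] fun z => g₁ z - (c₁ + 2 * c₂ * z) := by
    filter_upwards [hwne] with z hz
    exact ((hgD z hz).sub (hpolyD z)).deriv
  have h2 : deriv (deriv h) 0 = 0 := by
    rw [hEv.deriv_eq]
    have hlin : HasDerivAt (fun z : ℂ => c₁ + 2 * c₂ * z) (2 * c₂) 0 := by
      simpa using ((hasDerivAt_id (0:ℂ)).const_mul (2 * c₂)).const_add c₁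
    have hd := (hg₁D 0 (by rw [hw0]; exact hA)).sub hlin
    rw [show deriv (fun z => g₁ z - (c₁ + 2 * c₂ * z)) 0 = _ from hd.deriv, hw0, hsA, hcA]
    rw [hc₂_def, hA_def, hB_def, f₂]
    push_cast
    field_simp
    ring_nf
    rw [Complex.I_sq]
    ring
  -- conclude
  have hbig := analyticAt_isBigO_cube hhA h0 h1 h2
  have htend : Tendsto (fun ε : ℝ => (ε : ℂ)) (nhds 0) (nhds 0) := by
    simpa using Complex.continuous_ofReal.tendsto 0
  have hcomp : (fun ε : ℝ => h (ε : ℂ)) =O[nhds (0:ℝ)] fun ε : ℝ => ((ε : ℂ)) ^ 3 :=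
    hbig.comp_tendsto htend
  have hnorm : (fun ε : ℝ => ((ε : ℂ)) ^ 3) =O[nhds (0:ℝ)] fun ε : ℝ => ε ^ 3 := by
    refine isBigO_of_le _ fun x => ?_
    simp [norm_pow]
  have hEvF : (fun ε : ℝ =>
        csinhc ((ρ : ℂ) * ((ε : ℂ) * (γ : ℂ) + Complex.I * (ω : ℂ))) -
          (((Real.sin (ρ * ω) / (ρ * ω) : ℝ) : ℂ) +
            Complex.I * ((ε * ρ * γ : ℝ) : ℂ) * ((f₁ ρ ω : ℝ) : ℂ) +
            ((ε ^ 2 * ρ ^ 2 * γ ^ 2 : ℝ) : ℂ) * ((f₂ ρ ω : ℝ) : ℂ)))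
      =ᶠ[nhds (0:ℝ)] fun ε : ℝ => h (ε : ℂ) := by
    filter_upwards [htend.eventually hwne] with ε hε
    have harg : (ρ : ℂ) * ((ε : ℂ) * (γ : ℂ) + Complex.I * (ω : ℂ)) = w (ε : ℂ) := by
      rw [hw_def, hB_def, hA_def]; push_cast; ring
    rw [csinhc, if_neg (by rw [harg]; exact hε), harg]
    simp only [hh_def, hg_def]
    rw [hc₀_def, hc₁_def, hc₂_def, hB_def]
    push_cast
    ring
  exact hEvF.trans_isBigO (hcomp.trans hnorm)
end

section
/- For the scalar characteristic relation α + β e^{−γ} cos(φ) sinc(ρω) = 0 and ω + β e^{−γ} sin(φ) sinc(ρω) = 0 with β ≠ 0, ω real, ρ > 0 and ρω not an integer multiple of π: a solution (γ, φ) ∈ ℝ² exists if and only if γ = −(1/2)·ln((α² + ω²)/(β²·sinc²(ρω))), provided α² + ω² > 0. -/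
/-- `sinc x = sin x / x` for `x ≠ 0` and `1` at `x = 0`. -/
noncomputable def sinc (x : ℝ) : ℝ := if x = 0 then 1 else Real.sin x / x

/-- For the scalar characteristic relations, a solution `(γ, φ)` exists iff
`γ = −(1/2)·ln((α² + ω²)/(β²·sinc²(ρω)))`. -/
theorem scalar_spectral_curve (α β ρ ω γ : ℝ) (hβ : β ≠ 0) (hρ : 0 < ρ)
    (hs : sinc (ρ * ω) ≠ 0) (hαω : 0 < α ^ 2 + ω ^ 2) :
    (∃ φ : ℝ,
        α + β * Real.exp (-γ) * Real.cos φ * sinc (ρ * ω) = 0 ∧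
        ω + β * Real.exp (-γ) * Real.sin φ * sinc (ρ * ω) = 0) ↔
      γ = -(1 / 2) * Real.log ((α ^ 2 + ω ^ 2) / (β ^ 2 * (sinc (ρ * ω)) ^ 2)) := by
  set s := sinc (ρ * ω) with hsdef
  set R : ℝ := (α ^ 2 + ω ^ 2) / (β ^ 2 * s ^ 2) with hR
  have hden : 0 < β ^ 2 * s ^ 2 := by positivity
  have hRpos : 0 < R := div_pos hαω hden
  constructor
  · rintro ⟨φ, h1, h2⟩
    have hK : (β * Real.exp (-γ) * s) ^ 2 = α ^ 2 + ω ^ 2 := by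
      have hα : α = -(β * Real.exp (-γ) * Real.cos φ * s) := by linarith
      have hω : ω = -(β * Real.exp (-γ) * Real.sin φ * s) := by linarith
      have hpy := Real.sin_sq_add_cos_sq φ
      rw [hα, hω]; nlinarith [hpy]
    have hexp2 : Real.exp (-γ) ^ 2 = R := by
      rw [hR]
      field_simp
      nlinarith [hK]
    have : Real.exp (-(2 * γ)) = R := by
      rw [show -(2*γ) = (-γ) + (-γ) by ring, Real.exp_add, ← sq, hexp2]
    have hlog : -(2 * γ) = Real.log R := by
      rw [← this, Real.log_exp]
    linarith
  · intro hγ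
    have hexp2 : Real.exp (-γ) ^ 2 = R := by
      rw [hγ, ← Real.exp_nat_mul]
      push_cast
      rw [show (2:ℝ) * -(-(1/2) * Real.log R) = Real.log R by ring]
      exact Real.exp_log hRpos
    set K : ℝ := β * Real.exp (-γ) * s with hKdef
    have hK2 : K ^ 2 = α ^ 2 + ω ^ 2 := by
      rw [hKdef]
      have : (β * Real.exp (-γ) * s) ^ 2 = β ^ 2 * s ^ 2 * Real.exp (-γ) ^ 2 := by ring
      rw [this, hexp2, hR]
      field_simp
    have hKne : K ≠ 0 := by
      intro h
      rw [h] at hK2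
      simp at hK2
      nlinarith
    set z : ℂ := ⟨-α / K, -ω / K⟩ with hz
    have habs : ‖z‖ = 1 := by
      have : ‖z‖ ^ 2 = 1 := by
        rw [Complex.sq_norm, Complex.normSq_apply, hz]
        field_simp
        nlinarith
      nlinarith [norm_nonneg z, this]
    have hzne : z ≠ 0 := by
      intro h; rw [h] at habs; simp at habs
    refine ⟨z.arg, ?_, ?_⟩
    · have hc := Complex.cos_arg hzne
      rw [habs, div_one] at hc
      have : z.re = -α / K := rfl
      rw [hc, this]
      field_simp [hKdef]
      ring
    · have hsin := Complex.sin_arg z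
      rw [habs, div_one] at hsin
      have : z.im = -ω / K := rfl
      rw [hsin, this]
      field_simp [hKdef]
      ring
end

section
/- Let α, β ∈ ℝ with α ≠ 0 and β ≠ 0, ρ > 0, and define γ(ω) = −(1/2) ln((α² + ω²)/(β² sinc²(ρω))) for ω ∈ ℝ with ρω ∉ π·(ℤ∖{0}). Then γ attains its global maximum at ω = 0 with value γ* = ln|β/α|, and the value γ* does not depend on ρ. Consequently γ(ω) < 0 for all admissible ω if and only if |α| > |β|. -/
lemma abs_sinc_le_one (x : ℝ) : |sinc x| ≤ 1 := by
  unfold sinc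
  split
  · simp
  · rename_i hx
    rw [abs_div, div_le_one (abs_pos.mpr hx)]
    exact Real.abs_sin_le_abs

lemma sinc_ne_zero {x : ℝ} (h : ∀ k : ℤ, k ≠ 0 → x ≠ (k : ℝ) * Real.pi) : sinc x ≠ 0 := by
  unfold sinc
  split
  · norm_num
  · rename_i hx
    refine div_ne_zero ?_ hx
    intro hs
    obtain ⟨k, hk⟩ := Real.sin_eq_zero_iff.mp hs
    rcases eq_or_ne k 0 with rfl | hk0
    · simp at hk; exact hx hk.symm
    · exact h k hk0 hk.symm

/-- The spectral curve `γ(ω) = −(1/2)ln((α²+ω²)/(β² sinc²(ρω)))` of the scalar DDE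
attains its global maximum `γ* = ln|β/α|` at `ω = 0` (a value independent of `ρ`),
and `γ(ω) < 0` for all admissible `ω` iff `|α| > |β|`. -/
theorem scalar_curve_max (α β ρ : ℝ) (hα : α ≠ 0) (hβ : β ≠ 0) (hρ : 0 < ρ) :
    (fun ω : ℝ => -(1 / 2) * Real.log ((α ^ 2 + ω ^ 2) / (β ^ 2 * (sinc (ρ * ω)) ^ 2))) 0
        = Real.log |β / α| ∧
    (∀ ω : ℝ, (∀ k : ℤ, k ≠ 0 → ρ * ω ≠ (k : ℝ) * Real.pi) →
      -(1 / 2) * Real.log ((α ^ 2 + ω ^ 2) / (β ^ 2 * (sinc (ρ * ω)) ^ 2)) ≤ Real.log |β / α|) ∧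
    ((∀ ω : ℝ, (∀ k : ℤ, k ≠ 0 → ρ * ω ≠ (k : ℝ) * Real.pi) →
        -(1 / 2) * Real.log ((α ^ 2 + ω ^ 2) / (β ^ 2 * (sinc (ρ * ω)) ^ 2)) < 0) ↔
      |β| < |α|) := by
  have hα2 : (0:ℝ) < α ^ 2 := by positivity
  have hβ2 : (0:ℝ) < β ^ 2 := by positivity
  have hval : Real.log (α ^ 2 / β ^ 2) = -2 * Real.log |β / α| := by
    rw [Real.log_div (ne_of_gt hα2) (ne_of_gt hβ2), abs_div, Real.log_div (by positivity)
      (by positivity), Real.log_abs, Real.log_abs, Real.log_pow, Real.log_pow]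
    push_cast; ring
  have key : ∀ ω : ℝ, (∀ k : ℤ, k ≠ 0 → ρ * ω ≠ (k : ℝ) * Real.pi) →
      -(1 / 2) * Real.log ((α ^ 2 + ω ^ 2) / (β ^ 2 * (sinc (ρ * ω)) ^ 2)) ≤ Real.log |β / α| := by
    intro ω hadm
    have hs : sinc (ρ * ω) ≠ 0 := sinc_ne_zero hadm
    have hs2 : (0:ℝ) < (sinc (ρ * ω)) ^ 2 := by positivity
    have hs1 : (sinc (ρ * ω)) ^ 2 ≤ 1 := by
      have := abs_sinc_le_one (ρ * ω)
      nlinarith [abs_nonneg (sinc (ρ * ω)), sq_abs (sinc (ρ * ω))]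
    have hle : α ^ 2 / β ^ 2 ≤ (α ^ 2 + ω ^ 2) / (β ^ 2 * (sinc (ρ * ω)) ^ 2) := by
      rw [div_le_div_iff₀ hβ2 (by positivity)]
      nlinarith [sq_nonneg ω, mul_le_mul_of_nonneg_left hs1 (le_of_lt (mul_pos hα2 hβ2))]
    have := Real.log_le_log (by positivity) hle
    rw [hval] at this
    linarith
  have h0 : (fun ω : ℝ => -(1 / 2) * Real.log ((α ^ 2 + ω ^ 2) / (β ^ 2 * (sinc (ρ * ω)) ^ 2))) 0
      = Real.log |β / α| := by
    have : sinc (ρ * 0) = 1 := by simp [sinc]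
    simp only [this]
    rw [show (α ^ 2 + 0 ^ 2) / (β ^ 2 * 1 ^ 2) = α ^ 2 / β ^ 2 by ring]
    rw [hval]; ring
  refine ⟨h0, key, ?_⟩
  constructor
  · intro hall
    have hadm0 : ∀ k : ℤ, k ≠ 0 → ρ * (0:ℝ) ≠ (k : ℝ) * Real.pi := by
      intro k hk
      simp only [mul_zero]
      intro h
      have : (k:ℝ) = 0 := by
        have := Real.pi_ne_zero
        field_simp at h
        exact (mul_eq_zero.mp h.symm).resolve_right this
      exact_mod_cast hk (by exact_mod_cast this)
    have := hall 0 hadm0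
    have h0' := h0
    simp only at h0'
    rw [h0'] at this
    have hlt : |β / α| < 1 := by
      by_contra hle
      push_neg at hle
      exact absurd (Real.log_nonneg hle) (not_le.mpr this)
    rw [abs_div, div_lt_one (abs_pos.mpr hα)] at hlt
    exact hlt
  · intro hlt ω hadm
    have h1 : Real.log |β / α| < 0 := by
      apply Real.log_neg
      · positivity
      · rw [abs_div, div_lt_one (abs_pos.mpr hα)]; exact hlt
    exact lt_of_le_of_lt (key ω hadm) h1
end
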